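/- arXiv:math/0609402 — 3 statements merged into one kernel-verified Lean document; each statement's English description precedes it below -/
import Mathlib

section
/- Let K be a wedge in L⁰(Ω,F,P) and let M₁ = {Q ≪ P probability measure : K ⊆ L¹(Q), E_Q[X] ≤ 0 ∀ X ∈ K}. Let Φ : [0,∞) → (−∞,∞] be convex, finite on (0,∞), satisfying the growth condition: for every interval [λ₀,λ₁] ⊂ (0,∞) there exist α,β > 0 with Φ⁺(λy) ≤ αΦ⁺(y) + β(y+1) for all y > 0 and λ ∈ [λ₀,λ₁]. Then the set M̂_Φ = {Q ∈ M₁ : E_P[Φ⁺(dQ/dP) 1_{{dQ/dP ≥ 1}}] < ∞} of measures of finite loss-entropy is a face of the convex set M₁: if Q₀, Q₁ ∈ M₁, 0 < x < 1 and xQ₀ + (1−x)Q₁ ∈ M̂_Φ, then Q₀, Q₁ ∈ M̂_Φ. -/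
open MeasureTheory Set ENNReal

noncomputable section

variable {Ω : Type*} [MeasurableSpace Ω]

/-- A wedge: nonempty, closed under addition and nonnegative scalar multiplication. -/
def IsWedgeF {V : Type*} [AddCommMonoid V] [SMul ℝ V] (C : Set V) : Prop :=
  C.Nonempty ∧ (∀ x ∈ C, ∀ y ∈ C, x + y ∈ C) ∧ ∀ c : ℝ, 0 ≤ c → ∀ x ∈ C, c • x ∈ C

/-- The set `M₁(P;K)` of separating measures for the wedge `K ⊆ L⁰`. -/
def Msep (P : Measure Ω) (K : Set (Ω →ₘ[P] ℝ)) : Set (Measure Ω) :=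
  {Q | IsProbabilityMeasure Q ∧ Q ≪ P ∧
    ∀ X ∈ K, Integrable (X : Ω → ℝ) Q ∧ ∫ ω, X ω ∂Q ≤ 0}

/-- Positive part of an extended-real value, as an extended nonnegative real. -/
def epos (x : EReal) : ℝ≥0∞ := if x = ⊤ then ⊤ else ENNReal.ofReal x.toReal

/-- Convexity of `Φ : [0,∞) → (−∞,∞]` on the nonnegative half-line. -/
def ConvexOnNonneg (Φ : ℝ → EReal) : Prop :=
  ∀ x ∈ Ici (0:ℝ), ∀ y ∈ Ici (0:ℝ), ∀ t ∈ Icc (0:ℝ) 1,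
    Φ (t * x + (1 - t) * y) ≤ (t : EReal) * Φ x + ((1 - t : ℝ) : EReal) * Φ y

/-- The growth condition on `Φ` (reasonable asymptotic elasticity). -/
def GrowthCond (Φ : ℝ → EReal) : Prop :=
  ∀ l0 l1 : ℝ, 0 < l0 → l0 ≤ l1 → ∃ a : ℝ, 0 < a ∧ ∃ b : ℝ, 0 < b ∧
    ∀ y : ℝ, 0 < y → ∀ l ∈ Icc l0 l1,
      epos (Φ (l * y)) ≤ ENNReal.ofReal a * epos (Φ y) + ENNReal.ofReal (b * (y + 1))

/-- `Q` has finite entropy: `E_P[Φ⁺(dQ/dP)] < ∞`. -/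
def FiniteEntropy (Φ : ℝ → EReal) (P Q : Measure Ω) : Prop :=
  ∫⁻ ω, epos (Φ ((Q.rnDeriv P ω).toReal)) ∂P < ⊤

/-- `Q` has finite loss-entropy: `E_P[Φ⁺(dQ/dP) 1_{dQ/dP ≥ 1}] < ∞`. -/
def FiniteLossEntropy (Φ : ℝ → EReal) (P Q : Measure Ω) : Prop :=
  ∫⁻ ω in {ω | 1 ≤ (Q.rnDeriv P ω).toReal},
    epos (Φ ((Q.rnDeriv P ω).toReal)) ∂P < ⊤

/-- The set `M_Φ` of separating measures with finite entropy. -/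
def MPhi (Φ : ℝ → EReal) (P : Measure Ω) (K : Set (Ω →ₘ[P] ℝ)) : Set (Measure Ω) :=
  {Q ∈ Msep P K | FiniteEntropy Φ P Q}

/-- The set `M̂_Φ` of separating measures with finite loss-entropy. -/
def MPhiHat (Φ : ℝ → EReal) (P : Measure Ω) (K : Set (Ω →ₘ[P] ℝ)) : Set (Measure Ω) :=
  {Q ∈ Msep P K | FiniteLossEntropy Φ P Q}

lemma epos_mono {a b : EReal} (h : a ≤ b) : epos a ≤ epos b := by
  by_cases hb : b = ⊤
  · simp [epos, hb]
  · have ha : a ≠ ⊤ := fun h' => hb (top_le_iff.mp (h' ▸ h))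
    by_cases ha' : a = ⊥
    · simp [epos, ha, hb, ha']
    · simp only [epos, if_neg ha, if_neg hb]
      exact ENNReal.ofReal_le_ofReal (EReal.toReal_le_toReal h ha' hb)

lemma epos_ne_top {a : EReal} (h : a ≠ ⊤) : epos a ≠ ⊤ := by
  simp [epos, h]

lemma epos_coe (r : ℝ) : epos (r : EReal) = ENNReal.ofReal r := by
  simp [epos]

lemma between {Φ : ℝ → EReal} (hconv : ConvexOnNonneg Φ)
    (hfin : ∀ x : ℝ, 0 < x → Φ x ≠ ⊤) (hbot : ∀ x : ℝ, 0 ≤ x → Φ x ≠ ⊥)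
    {a z b : ℝ} (ha : 0 < a) (h1 : a ≤ z) (h2 : z ≤ b) :
    epos (Φ z) ≤ max (epos (Φ a)) (epos (Φ b)) := by
  have hb : 0 < b := lt_of_lt_of_le ha (h1.trans h2)
  rcases eq_or_lt_of_le (h1.trans h2) with heq | hab
  · have : z = a := le_antisymm (heq ▸ h2) h1
    subst this; exact le_max_left _ _
  · have hfa := EReal.coe_toReal (hfin a ha) (hbot a ha.le)
    have hfb := EReal.coe_toReal (hfin b hb) (hbot b hb.le)
    set ra := (Φ a).toReal
    set rb := (Φ b).toReal
    set t : ℝ := (b - z) / (b - a) with ht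
    have hba : (0:ℝ) < b - a := by linarith
    have ht0 : 0 ≤ t := div_nonneg (by linarith) hba.le
    have ht1 : t ≤ 1 := (div_le_one hba).mpr (by linarith)
    have key := hconv a (mem_Ici.mpr ha.le) b (mem_Ici.mpr hb.le) t ⟨ht0, ht1⟩
    have hz : t * a + (1 - t) * b = z := by
      rw [ht]
      field_simp
      ring
    rw [hz, ← hfa, ← hfb] at key
    have key2 : Φ z ≤ ((t * ra + (1 - t) * rb : ℝ) : EReal) := by
      refine key.trans_eq ?_
      push_cast
      rfl
    refine (epos_mono key2).trans ?_
    rw [epos_coe]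
    rcases le_total ra rb with h | h
    · refine le_max_of_le_right ?_
      rw [← hfb, epos_coe]
      exact ENNReal.ofReal_le_ofReal (by nlinarith)
    · refine le_max_of_le_left ?_
      rw [← hfa, epos_coe]
      exact ENNReal.ofReal_le_ofReal (by nlinarith)

lemma aux_fle {Ω : Type*} [MeasurableSpace Ω] (P : Measure Ω) [IsProbabilityMeasure P]
    {Φ : ℝ → EReal} (hconv : ConvexOnNonneg Φ)
    (hfin : ∀ x : ℝ, 0 < x → Φ x ≠ ⊤) (hbot : ∀ x : ℝ, 0 ≤ x → Φ x ≠ ⊥)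
    (hgrowth : GrowthCond Φ)
    (Q Q' : Measure Ω) [IsFiniteMeasure Q']
    (c : ℝ) (hc : 0 < c)
    (hle : ∀ᵐ ω ∂P, c * (Q.rnDeriv P ω).toReal ≤ (Q'.rnDeriv P ω).toReal)
    (hQ' : FiniteLossEntropy Φ P Q') : FiniteLossEntropy Φ P Q := by
  obtain ⟨α, hα, β, hβ, hG⟩ := hgrowth (1/c) (1/c) (by positivity) le_rfl
  unfold FiniteLossEntropy at hQ' ⊢
  set f : Ω → ℝ := fun ω => (Q.rnDeriv P ω).toReal with hf
  set g : Ω → ℝ := fun ω => (Q'.rnDeriv P ω).toReal with hg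
  set C₀ : ℝ≥0∞ := epos (Φ 1) with hC₀
  set C₁ : ℝ≥0∞ := max (epos (Φ c)) (epos (Φ 1)) with hC₁
  set I : Ω → ℝ≥0∞ := ({ω | 1 ≤ g ω}).indicator (fun ω => epos (Φ (g ω))) with hI
  have hC₀top : C₀ ≠ ⊤ := epos_ne_top (hfin 1 one_pos)
  have hC₁top : C₁ < ⊤ := max_lt (epos_ne_top (hfin c hc)).lt_top
    (epos_ne_top (hfin 1 one_pos)).lt_top
  -- pointwise bound
  have hpt : ∀ᵐ ω ∂P, ({ω | 1 ≤ f ω}).indicator (fun ω => epos (Φ (f ω))) ω ≤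
      (C₀ + ENNReal.ofReal α * C₁ + ENNReal.ofReal β * (Q'.rnDeriv P ω + 1))
        + ENNReal.ofReal α * I ω := by
    filter_upwards [hle] with ω hω
    by_cases hfω : ω ∈ {ω | 1 ≤ f ω}
    · rw [Set.indicator_of_mem hfω]
      have hf1 : 1 ≤ f ω := hfω
      have hcg : c ≤ g ω := le_trans (by nlinarith) hω
      have hg0 : 0 < g ω := lt_of_lt_of_le hc hcg
      have hfb : f ω ≤ 1/c * g ω := by
        rw [one_div, inv_mul_eq_div, le_div_iff₀ hc]
        linarith [mul_comm (f ω) c]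
      have step1 := between hconv hfin hbot one_pos hf1 hfb
      have step2 := hG (g ω) hg0 (1/c) ⟨le_rfl, le_rfl⟩
      have step3 : epos (Φ (g ω)) ≤ I ω + C₁ := by
        by_cases hg1 : ω ∈ {ω | 1 ≤ g ω}
        · rw [hI, Set.indicator_of_mem hg1]
          exact le_self_add
        · have h2 := between hconv hfin hbot hc hcg (le_of_not_ge hg1)
          exact h2.trans le_add_self
      have step4 : ENNReal.ofReal (β * (g ω + 1)) ≤
          ENNReal.ofReal β * (Q'.rnDeriv P ω + 1) := by
        rw [ENNReal.ofReal_mul hβ.le]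
        refine mul_le_mul_right ?_ _
        rw [ENNReal.ofReal_add ENNReal.toReal_nonneg zero_le_one, ENNReal.ofReal_one]
        exact add_le_add_left ENNReal.ofReal_toReal_le 1
      calc epos (Φ (f ω)) ≤ max C₀ (epos (Φ (1/c * g ω))) := step1
        _ ≤ C₀ + epos (Φ (1/c * g ω)) := max_le le_self_add le_add_self
        _ ≤ C₀ + (ENNReal.ofReal α * epos (Φ (g ω)) + ENNReal.ofReal (β * (g ω + 1))) :=
            add_le_add_right step2 _
        _ ≤ C₀ + (ENNReal.ofReal α * (I ω + C₁) + ENNReal.ofReal β * (Q'.rnDeriv P ω + 1)) :=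
            add_le_add_right (add_le_add (mul_le_mul_right step3 _) step4) _
        _ = (C₀ + ENNReal.ofReal α * C₁ + ENNReal.ofReal β * (Q'.rnDeriv P ω + 1))
              + ENNReal.ofReal α * I ω := by ring
    · rw [Set.indicator_of_notMem hfω]
      exact zero_le
  -- measurability
  have hfmeas : Measurable f := (Measure.measurable_rnDeriv Q P).ennreal_toReal
  have hgmeas : Measurable g := (Measure.measurable_rnDeriv Q' P).ennreal_toReal
  have hAset : MeasurableSet {ω | 1 ≤ f ω} := measurableSet_le measurable_const hfmeas
  have hGset : MeasurableSet {ω | 1 ≤ g ω} := measurableSet_le measurable_const hgmeas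
  have hIint : ∫⁻ ω, I ω ∂P < ⊤ := by
    rw [hI, lintegral_indicator hGset]
    exact hQ'
  have hmmeas : Measurable (fun ω =>
      C₀ + ENNReal.ofReal α * C₁ + ENNReal.ofReal β * (Q'.rnDeriv P ω + 1)) :=
    measurable_const.add (((Measure.measurable_rnDeriv Q' P).add measurable_const).const_mul _)
  have hmint : (∫⁻ ω, (C₀ + ENNReal.ofReal α * C₁
      + ENNReal.ofReal β * (Q'.rnDeriv P ω + 1)) ∂P) < ⊤ := by
    have h1 : (∫⁻ ω, (Q'.rnDeriv P ω + 1) ∂P) < ⊤ := by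
      rw [lintegral_add_right _ measurable_const, lintegral_const, measure_univ, mul_one]
      exact ENNReal.add_lt_top.mpr ⟨Measure.lintegral_rnDeriv_lt_top Q' P, one_lt_top⟩
    rw [lintegral_add_left measurable_const, lintegral_const_mul' _ _ ENNReal.ofReal_ne_top,
      lintegral_const, measure_univ, mul_one]
    refine ENNReal.add_lt_top.mpr ⟨ENNReal.add_lt_top.mpr ⟨hC₀top.lt_top,
      ENNReal.mul_lt_top ENNReal.ofReal_lt_top hC₁top⟩, ?_⟩
    exact ENNReal.mul_lt_top ENNReal.ofReal_lt_top h1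
  calc ∫⁻ ω in {ω | 1 ≤ f ω}, epos (Φ (f ω)) ∂P
      = ∫⁻ ω, ({ω | 1 ≤ f ω}).indicator (fun ω => epos (Φ (f ω))) ω ∂P :=
        (lintegral_indicator hAset _).symm
    _ ≤ ∫⁻ ω, ((C₀ + ENNReal.ofReal α * C₁ + ENNReal.ofReal β * (Q'.rnDeriv P ω + 1))
          + ENNReal.ofReal α * I ω) ∂P := lintegral_mono_ae hpt
    _ = (∫⁻ ω, (C₀ + ENNReal.ofReal α * C₁ + ENNReal.ofReal β * (Q'.rnDeriv P ω + 1)) ∂P)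
          + ∫⁻ ω, ENNReal.ofReal α * I ω ∂P := lintegral_add_left hmmeas _
    _ < ⊤ := by
        refine ENNReal.add_lt_top.mpr ⟨hmint, ?_⟩
        rw [lintegral_const_mul' _ _ ENNReal.ofReal_ne_top]
        exact ENNReal.mul_lt_top ENNReal.ofReal_lt_top hIint



/-- If `Φ` satisfies the growth condition, the set `M̂_Φ` of separating measures
with finite loss-entropy is a face of `M₁`: if a strict convex combination of
`Q₀, Q₁ ∈ M₁` lies in `M̂_Φ`, then both `Q₀` and `Q₁` lie in `M̂_Φ`. -/
theorem MPhiHat_face (P : Measure Ω) [IsProbabilityMeasure P]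
    (K : Set (Ω →ₘ[P] ℝ)) (hK : IsWedgeF K)
    (Φ : ℝ → EReal) (hconv : ConvexOnNonneg Φ)
    (hfin : ∀ x : ℝ, 0 < x → Φ x ≠ ⊤) (hbot : ∀ x : ℝ, 0 ≤ x → Φ x ≠ ⊥)
    (hgrowth : GrowthCond Φ)
    (Q₀ Q₁ : Measure Ω) (h0 : Q₀ ∈ Msep P K) (h1 : Q₁ ∈ Msep P K)
    (x : ℝ) (hx0 : 0 < x) (hx1 : x < 1)
    (hQ : ENNReal.ofReal x • Q₀ + ENNReal.ofReal (1 - x) • Q₁ ∈ MPhiHat Φ P K) :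
    Q₀ ∈ MPhiHat Φ P K ∧ Q₁ ∈ MPhiHat Φ P K := by
  have i0 : IsProbabilityMeasure Q₀ := h0.1
  have i1 : IsProbabilityMeasure Q₁ := h1.1
  set Q' : Measure Ω := ENNReal.ofReal x • Q₀ + ENNReal.ofReal (1 - x) • Q₁ with hQ'def
  have ifin0 : IsFiniteMeasure (ENNReal.ofReal x • Q₀) := by
    constructor
    simp only [Measure.smul_apply, smul_eq_mul, measure_univ, mul_one]
    exact ENNReal.ofReal_lt_top
  have ifin1 : IsFiniteMeasure (ENNReal.ofReal (1 - x) • Q₁) := by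
    constructor
    simp only [Measure.smul_apply, smul_eq_mul, measure_univ, mul_one]
    exact ENNReal.ofReal_lt_top
  have ifin : IsFiniteMeasure Q' := by
    constructor
    rw [hQ'def]
    simp only [Measure.add_apply, Measure.smul_apply, smul_eq_mul, measure_univ, mul_one]
    exact ENNReal.add_lt_top.mpr ⟨ENNReal.ofReal_lt_top, ENNReal.ofReal_lt_top⟩
  have hadd : Q'.rnDeriv P =ᵐ[P]
      (ENNReal.ofReal x • Q₀).rnDeriv P + (ENNReal.ofReal (1 - x) • Q₁).rnDeriv P :=
    Measure.rnDeriv_add _ _ _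
  have hs0 : (ENNReal.ofReal x • Q₀).rnDeriv P =ᵐ[P] ENNReal.ofReal x • Q₀.rnDeriv P :=
    Measure.rnDeriv_smul_left_of_ne_top Q₀ P ENNReal.ofReal_ne_top
  have hs1 : (ENNReal.ofReal (1 - x) • Q₁).rnDeriv P =ᵐ[P]
      ENNReal.ofReal (1 - x) • Q₁.rnDeriv P :=
    Measure.rnDeriv_smul_left_of_ne_top Q₁ P ENNReal.ofReal_ne_top
  have h0top := Measure.rnDeriv_lt_top Q₀ P
  have h1top := Measure.rnDeriv_lt_top Q₁ P
  have hkey : ∀ᵐ ω ∂P, (Q'.rnDeriv P ω).toReal =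
      x * (Q₀.rnDeriv P ω).toReal + (1 - x) * (Q₁.rnDeriv P ω).toReal := by
    filter_upwards [hadd, hs0, hs1, h0top, h1top] with ω e1 e2 e3 e4 e5
    rw [e1]
    simp only [Pi.add_apply, Pi.smul_apply, smul_eq_mul] at e2 e3 ⊢
    rw [e2, e3, ENNReal.toReal_add, ENNReal.toReal_mul, ENNReal.toReal_mul,
      ENNReal.toReal_ofReal hx0.le, ENNReal.toReal_ofReal (by linarith : (0:ℝ) ≤ 1 - x)]
    · exact ENNReal.mul_ne_top ENNReal.ofReal_ne_top e4.ne
    · exact ENNReal.mul_ne_top ENNReal.ofReal_ne_top e5.ne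
  have hle0 : ∀ᵐ ω ∂P, x * (Q₀.rnDeriv P ω).toReal ≤ (Q'.rnDeriv P ω).toReal := by
    filter_upwards [hkey] with ω e
    rw [e]
    have : 0 ≤ (1 - x) * (Q₁.rnDeriv P ω).toReal :=
      mul_nonneg (by linarith) ENNReal.toReal_nonneg
    linarith
  have hle1 : ∀ᵐ ω ∂P, (1 - x) * (Q₁.rnDeriv P ω).toReal ≤ (Q'.rnDeriv P ω).toReal := by
    filter_upwards [hkey] with ω e
    rw [e]
    have : 0 ≤ x * (Q₀.rnDeriv P ω).toReal := mul_nonneg hx0.le ENNReal.toReal_nonneg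
    linarith
  have hfle : FiniteLossEntropy Φ P Q' := hQ.2
  exact ⟨⟨h0, aux_fle P hconv hfin hbot hgrowth Q₀ Q' x hx0 hle0 hfle⟩,
    ⟨h1, aux_fle P hconv hfin hbot hgrowth Q₁ Q' (1 - x) (by linarith) hle1 hfle⟩⟩

end
end

section
/- Let K be a wedge in L⁰, M a nonempty subset of M₁ = M₁(P;K), E = ⋂_{Q∈M} L¹(Q), and F the linear span of {dQ/dP : Q ∈ M} in L¹(P), paired via ⟨z,w⟩ = E_P[zw]. Then the polar wedge of the umbrella hull s_E(K) = K − E_+ satisfies: s_E(K)^◁ = L¹_+(P) ∩ K^◁ = F ∩ cone(R(M₁)), where R(Q) = dQ/dP. In particular, F ∩ cone(R(M₁)) is σ(F,E)-closed and contains the σ(F,E)-closure of cone(R(M)). -/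
open MeasureTheory Set ENNReal

noncomputable section

variable {Ω : Type*} [MeasurableSpace Ω]

/-- The smallest wedge containing `S`. -/
def wedgeGenF {V : Type*} [AddCommMonoid V] [SMul ℝ V] (S : Set V) : Set V :=
  ⋂₀ {C : Set V | IsWedgeF C ∧ S ⊆ C}

/-- `R(Q) = dQ/dP`, the Radon–Nikodym derivative as an element of `L⁰(P)`. -/
def dens (P Q : Measure Ω) : Ω →ₘ[P] ℝ :=
  AEEqFun.mk (fun ω => (Q.rnDeriv P ω).toReal)
    (Measure.measurable_rnDeriv Q P).ennreal_toReal.aestronglyMeasurable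

/-- The bilinear pairing `⟨z,w⟩ = E_P[zw]`. -/
def pairP (P : Measure Ω) (z w : Ω →ₘ[P] ℝ) : ℝ :=
  ∫ ω, z ω * w ω ∂P

/-- the space `E = ⋂_{Q ∈ M} L¹(Q)` of `M`-integrable contingent claims. -/
def Espace (P : Measure Ω) (M : Set (Measure Ω)) : Set (Ω →ₘ[P] ℝ) :=
  {X | ∀ Q ∈ M, Integrable (X : Ω → ℝ) Q}

/-- the space `F`, the linear span of the densities `dQ/dP`, `Q ∈ M`. -/
def Fspace (P : Measure Ω) (M : Set (Measure Ω)) : Set (Ω →ₘ[P] ℝ) :=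
  (Submodule.span ℝ (dens P '' M) : Set (Ω →ₘ[P] ℝ))

/-- The umbrella hull `s_E(K) = K − E₊` inside `E`. -/
def umbrella (P : Measure Ω) (K D : Set (Ω →ₘ[P] ℝ)) : Set (Ω →ₘ[P] ℝ) :=
  {X | ∃ g ∈ K, ∃ p ∈ D, (0 ≤ᵐ[P] (p : Ω → ℝ)) ∧ X = g - p}

/-- The polar wedge, within `D`, of a set `A`, for the pairing `⟨z,w⟩ = E_P[zw]`. -/
def polarIn (P : Measure Ω) (D A : Set (Ω →ₘ[P] ℝ)) : Set (Ω →ₘ[P] ℝ) :=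
  {w ∈ D | ∀ z ∈ A, pairP P z w ≤ 0}

/-- The closure of `S` in the weak topology generated by the functionals
`v ↦ ⟨v,w⟩ = E_P[vw]`, `w ∈ D`. -/
def wcl (P : Measure Ω) (D S : Set (Ω →ₘ[P] ℝ)) : Set (Ω →ₘ[P] ℝ) :=
  {v | ∀ (n : ℕ) (w : Fin n → (Ω →ₘ[P] ℝ)), (∀ i, w i ∈ D) →
    ∀ ε : ℝ, 0 < ε → ∃ s ∈ S, ∀ i, |pairP P v (w i) - pairP P s (w i)| < ε}

/-- `c_E(K)`: the `σ(E,F)`-closure (within `E`) of the umbrella hull `s_E(K)`. -/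
def cEK (P : Measure Ω) (K : Set (Ω →ₘ[P] ℝ)) (M : Set (Measure Ω)) : Set (Ω →ₘ[P] ℝ) :=
  Espace P M ∩ wcl P (Fspace P M) (umbrella P K (Espace P M))

section Aux

variable {Ω : Type*} [MeasurableSpace Ω] {P : Measure Ω} {K : Set (Ω →ₘ[P] ℝ)}
  {M : Set (Measure Ω)}

/-- The comparison wedge `C`. -/
def Cset (P : Measure Ω) (K : Set (Ω →ₘ[P] ℝ)) : Set (Ω →ₘ[P] ℝ) :=
  {w | (0 ≤ᵐ[P] (w : Ω → ℝ)) ∧ ∀ X ∈ K,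
    Integrable (fun ω => (X : Ω → ℝ) ω * (w : Ω → ℝ) ω) P ∧
    ∫ ω, (X : Ω → ℝ) ω * (w : Ω → ℝ) ω ∂P ≤ 0}

lemma dens_coe (P Q : Measure Ω) :
    (dens P Q : Ω → ℝ) =ᵐ[P] fun ω => (Q.rnDeriv P ω).toReal :=
  AEEqFun.coeFn_mk _ _

lemma zero_mem_K (hK : IsWedgeF K) : (0 : Ω →ₘ[P] ℝ) ∈ K := by
  obtain ⟨x, hx⟩ := hK.1
  simpa using hK.2.2 0 le_rfl x hx

lemma K_sub_E (hM : M ⊆ Msep P K) : K ⊆ Espace P M :=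
  fun g hg Q hQ => ((hM hQ).2.2 g hg).1

lemma mem_wedgeGenF {V : Type*} [AddCommMonoid V] [SMul ℝ V] {S : Set V} {x : V}
    (h : x ∈ S) : x ∈ wedgeGenF S :=
  fun _C hC => hC.2 h

lemma smul_mem_wedgeGenF {V : Type*} [AddCommMonoid V] [SMul ℝ V] {S : Set V} {x : V}
    {c : ℝ} (hc : 0 ≤ c) (h : x ∈ wedgeGenF S) : c • x ∈ wedgeGenF S :=
  fun C hC => hC.1.2.2 c hc x (h C hC)

lemma zero_mem_wedgeGenF {V : Type*} [AddCommMonoid V] [Module ℝ V] {S : Set V}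
    (hS : S.Nonempty) : (0 : V) ∈ wedgeGenF S := by
  obtain ⟨s, hs⟩ := hS
  have := smul_mem_wedgeGenF (le_refl (0:ℝ)) (mem_wedgeGenF hs)
  simpa using this

lemma wedgeGenF_mono {V : Type*} [AddCommMonoid V] [SMul ℝ V] {S T : Set V}
    (h : S ⊆ T) : wedgeGenF S ⊆ wedgeGenF T :=
  fun x hx C hC => hx C ⟨hC.1, h.trans hC.2⟩

/-- Elements of `F` are `P`-integrable. -/
lemma F_integrable (hM : M ⊆ Msep P K) {w : Ω →ₘ[P] ℝ} (hw : w ∈ Fspace P M) :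
    Integrable (w : Ω → ℝ) P := by
  refine Submodule.span_induction (p := fun (w : Ω →ₘ[P] ℝ) _ => Integrable (w : Ω → ℝ) P) ?_ ?_ ?_ ?_ hw
  · rintro _ ⟨Q, hQ, rfl⟩
    haveI : IsProbabilityMeasure Q := (hM hQ).1
    exact (Measure.integrable_toReal_rnDeriv (μ := Q) (ν := P)).congr (dens_coe P Q).symm
  · exact (integrable_zero _ _ _).congr (AEEqFun.coeFn_zero (β := ℝ) (μ := P)).symm
  · exact fun x y _ _ hx hy => (hx.add hy).congr (AEEqFun.coeFn_add x y).symm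
  · exact fun c x _ hx => (hx.smul c).congr (AEEqFun.coeFn_smul c x).symm

/-- Products of elements of `E` with elements of `F` are `P`-integrable. -/
lemma EF_integrable [IsProbabilityMeasure P] (hM : M ⊆ Msep P K) {p w : Ω →ₘ[P] ℝ}
    (hp : p ∈ Espace P M) (hw : w ∈ Fspace P M) :
    Integrable (fun ω => (p : Ω → ℝ) ω * (w : Ω → ℝ) ω) P := by
  refine Submodule.span_induction
    (p := fun (w : Ω →ₘ[P] ℝ) _ => Integrable (fun ω => (p : Ω → ℝ) ω * (w : Ω → ℝ) ω) P) ?_ ?_ ?_ ?_ hw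
  · rintro _ ⟨Q, hQ, rfl⟩
    haveI : IsProbabilityMeasure Q := (hM hQ).1
    have h1 : Integrable (fun x => (Q.rnDeriv P x).toReal • (p : Ω → ℝ) x) P :=
      (integrable_rnDeriv_smul_iff (hM hQ).2.1).mpr (hp Q hQ)
    refine h1.congr ?_
    filter_upwards [dens_coe P Q] with ω hω
    simp [hω, mul_comm]
  · refine (integrable_zero _ _ _).congr ?_
    filter_upwards [AEEqFun.coeFn_zero (β := ℝ) (μ := P)] with ω hω
    simp [hω]
  · intro x y _ _ hx hy
    refine (hx.add hy).congr ?_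
    filter_upwards [AEEqFun.coeFn_add x y] with ω hω
    simp [hω, mul_add]
  · intro c x _ hx
    refine (hx.smul c).congr ?_
    filter_upwards [AEEqFun.coeFn_smul c x] with ω hω
    simp [hω, mul_comm, mul_left_comm]

/-- `Cset` is a wedge. -/
lemma Cset_isWedge : IsWedgeF (Cset P K) := by
  refine ⟨⟨0, ?_, fun X _ => ?_⟩, ?_, ?_⟩
  · filter_upwards [AEEqFun.coeFn_zero (β := ℝ) (μ := P)] with ω hω
    simp [hω]
  · constructor
    · refine (integrable_zero _ _ _).congr ?_
      filter_upwards [AEEqFun.coeFn_zero (β := ℝ) (μ := P)] with ω hω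
      simp [hω]
    · have : (fun ω => (X : Ω → ℝ) ω * ((0 : Ω →ₘ[P] ℝ) : Ω → ℝ) ω) =ᵐ[P] (fun _ => (0:ℝ)) := by
        filter_upwards [AEEqFun.coeFn_zero (β := ℝ) (μ := P)] with ω hω
        simp [hω]
      rw [integral_congr_ae this]; simp
  · rintro x ⟨hx0, hx⟩ y ⟨hy0, hy⟩
    refine ⟨?_, fun X hX => ?_⟩
    · filter_upwards [AEEqFun.coeFn_add x y, hx0, hy0] with ω h1 h2 h3
      simp only [h1, Pi.add_apply]
      exact add_nonneg h2 h3
    · have hcongr : (fun ω => (X : Ω → ℝ) ω * ((x + y : Ω →ₘ[P] ℝ) : Ω → ℝ) ω) =ᵐ[P]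
          (fun ω => (X : Ω → ℝ) ω * (x : Ω → ℝ) ω + (X : Ω → ℝ) ω * (y : Ω → ℝ) ω) := by
        filter_upwards [AEEqFun.coeFn_add x y] with ω hω
        simp [hω, mul_add]
      constructor
      · exact (((hx X hX).1).add ((hy X hX).1)).congr hcongr.symm
      · rw [integral_congr_ae hcongr, integral_add (hx X hX).1 (hy X hX).1]
        exact add_nonpos (hx X hX).2 (hy X hX).2
  · rintro c hc x ⟨hx0, hx⟩
    refine ⟨?_, fun X hX => ?_⟩
    · filter_upwards [AEEqFun.coeFn_smul c x, hx0] with ω h1 h2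
      simp only [h1, Pi.smul_apply, smul_eq_mul]
      exact mul_nonneg hc h2
    · have hcongr : (fun ω => (X : Ω → ℝ) ω * ((c • x : Ω →ₘ[P] ℝ) : Ω → ℝ) ω) =ᵐ[P]
          (fun ω => c * ((X : Ω → ℝ) ω * (x : Ω → ℝ) ω)) := by
        filter_upwards [AEEqFun.coeFn_smul c x] with ω hω
        simp [hω]; ring
      constructor
      · exact (((hx X hX).1).const_mul c).congr hcongr.symm
      · rw [integral_congr_ae hcongr, integral_const_mul]
        exact mul_nonpos_of_nonneg_of_nonpos hc (hx X hX).2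

/-- Densities of separating measures belong to `Cset`. -/
lemma dens_mem_Cset [IsProbabilityMeasure P] {Q : Measure Ω} (hQ : Q ∈ Msep P K) : dens P Q ∈ Cset P K := by
  obtain ⟨hprob, hac, hsep⟩ := hQ
  haveI := hprob
  refine ⟨?_, fun X hX => ?_⟩
  · filter_upwards [dens_coe P Q] with ω hω
    simp [hω, ENNReal.toReal_nonneg]
  · have h1 : Integrable (fun x => (Q.rnDeriv P x).toReal • (X : Ω → ℝ) x) P :=
      (integrable_rnDeriv_smul_iff hac).mpr (hsep X hX).1
    have hcongr : (fun ω => (X : Ω → ℝ) ω * (dens P Q : Ω → ℝ) ω) =ᵐ[P]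
        (fun x => (Q.rnDeriv P x).toReal • (X : Ω → ℝ) x) := by
      filter_upwards [dens_coe P Q] with ω hω
      simp [hω, mul_comm]
    refine ⟨h1.congr hcongr.symm, ?_⟩
    rw [integral_congr_ae hcongr, integral_rnDeriv_smul hac]
    exact (hsep X hX).2

lemma wedgeGen_sub_Cset [IsProbabilityMeasure P] : wedgeGenF (dens P '' Msep P K) ⊆ Cset P K := by
  intro x hx
  exact hx (Cset P K) ⟨Cset_isWedge, by rintro _ ⟨Q, hQ, rfl⟩; exact dens_mem_Cset hQ⟩

end Aux


section Key

variable {Ω : Type*} [MeasurableSpace Ω] {P : Measure Ω} {K : Set (Ω →ₘ[P] ℝ)}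
  {M : Set (Measure Ω)}

/-- Any nonnegative integrable `w` with `∫ Xw ≤ 0` for all `X ∈ K` lies in the cone
generated by the densities of separating measures. -/
lemma mem_wedgeGen_of [IsProbabilityMeasure P] (hKne : (Msep P K).Nonempty)
    {w : Ω →ₘ[P] ℝ} (hwint : Integrable (w : Ω → ℝ) P) (hw0 : 0 ≤ᵐ[P] (w : Ω → ℝ))
    (hXw : ∀ X ∈ K, Integrable (fun ω => (X : Ω → ℝ) ω * (w : Ω → ℝ) ω) P ∧
      ∫ ω, (X : Ω → ℝ) ω * (w : Ω → ℝ) ω ∂P ≤ 0) :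
    w ∈ wedgeGenF (dens P '' Msep P K) := by
  set c : ℝ := ∫ ω, (w : Ω → ℝ) ω ∂P with hc
  have hc0 : 0 ≤ c := integral_nonneg_of_ae hw0
  rcases eq_or_lt_of_le hc0 with hceq | hcpos
  · have hw0' : (w : Ω → ℝ) =ᵐ[P] 0 :=
      (integral_eq_zero_iff_of_nonneg_ae hw0 hwint).mp hceq.symm
    have hwz : w = (0 : Ω →ₘ[P] ℝ) :=
      AEEqFun.ext (hw0'.trans (AEEqFun.coeFn_zero (β := ℝ) (μ := P)).symm)
    rw [hwz]
    exact zero_mem_wedgeGenF (hKne.image _)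
  · obtain ⟨w', hw'meas, hww'⟩ := hwint.aestronglyMeasurable.aemeasurable
    have hw'0 : 0 ≤ᵐ[P] w' := by
      filter_upwards [hw0, hww'] with ω h1 h2
      rw [← h2]; exact h1
    set f : Ω → ℝ≥0∞ := fun ω => ENNReal.ofReal (w' ω / c) with hf
    have hfmeas : Measurable f := (hw'meas.div_const c).ennreal_ofReal
    set Q : Measure Ω := P.withDensity f with hQdef
    have hac : Q ≪ P := withDensity_absolutelyContinuous _ _
    have hwc_int : Integrable (fun ω => w' ω / c) P := (hwint.congr hww').div_const c
    have hwc0 : 0 ≤ᵐ[P] fun ω => w' ω / c := by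
      filter_upwards [hw'0] with ω h
      exact div_nonneg h hc0
    have hintc : ∫ ω, w' ω / c ∂P = 1 := by
      rw [integral_div, integral_congr_ae hww'.symm, ← hc, div_self (ne_of_gt hcpos)]
    have hQuniv : Q Set.univ = 1 := by
      rw [hQdef, withDensity_apply _ MeasurableSet.univ, Measure.restrict_univ, hf,
        ← ofReal_integral_eq_lintegral_ofReal hwc_int hwc0, hintc, ENNReal.ofReal_one]
    haveI hQprob : IsProbabilityMeasure Q := ⟨hQuniv⟩
    have hrn : Q.rnDeriv P =ᵐ[P] f := Measure.rnDeriv_withDensity P hfmeas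
    have hdens : (dens P Q : Ω → ℝ) =ᵐ[P] fun ω => w' ω / c := by
      filter_upwards [dens_coe P Q, hrn, hw'0] with ω h1 h2 h3
      rw [h1, h2, hf]
      exact ENNReal.toReal_ofReal (div_nonneg h3 hc0)
    have hQsep : Q ∈ Msep P K := by
      refine ⟨hQprob, hac, fun X hX => ?_⟩
      have hsmul : (fun x => (Q.rnDeriv P x).toReal • (X : Ω → ℝ) x) =ᵐ[P]
          (fun ω => ((X : Ω → ℝ) ω * (w : Ω → ℝ) ω) / c) := by
        filter_upwards [hrn, hww', hw'0] with ω h1 h2 h3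
        rw [h1, hf, smul_eq_mul, ENNReal.toReal_ofReal (div_nonneg h3 hc0), ← h2]
        ring
      have hint : Integrable (fun x => (Q.rnDeriv P x).toReal • (X : Ω → ℝ) x) P :=
        ((hXw X hX).1.div_const c).congr hsmul.symm
      refine ⟨(integrable_rnDeriv_smul_iff hac).mp hint, ?_⟩
      rw [← integral_rnDeriv_smul hac (f := (X : Ω → ℝ)), integral_congr_ae hsmul, integral_div]
      exact div_nonpos_of_nonpos_of_nonneg (hXw X hX).2 hc0
    have hwd : w = c • dens P Q := by
      refine AEEqFun.ext ?_
      filter_upwards [hww', AEEqFun.coeFn_smul c (dens P Q), hdens] with ω h1 h2 h3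
      rw [h1, h2, Pi.smul_apply, h3, smul_eq_mul]
      field_simp
    rw [hwd]
    exact smul_mem_wedgeGenF hc0 (mem_wedgeGenF ⟨Q, hQsep, rfl⟩)

/-- a.e. nonnegativity from nonnegative pairing against nonnegative test claims. -/
lemma ae_nonneg_of_test (hM : M ⊆ Msep P K) {w : Ω →ₘ[P] ℝ}
    (hwint : Integrable (w : Ω → ℝ) P)
    (H : ∀ p ∈ Espace P M, (0 ≤ᵐ[P] (p : Ω → ℝ)) →
      0 ≤ ∫ ω, (p : Ω → ℝ) ω * (w : Ω → ℝ) ω ∂P) :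
    0 ≤ᵐ[P] (w : Ω → ℝ) := by
  obtain ⟨w', hw'meas, hww'⟩ := hwint.aestronglyMeasurable.aemeasurable
  set A : Set Ω := {ω | w' ω < 0} with hA
  have hAm : MeasurableSet A := measurableSet_lt hw'meas measurable_const
  set p : Ω →ₘ[P] ℝ := AEEqFun.mk (A.indicator fun _ => (1:ℝ))
    ((measurable_const.indicator hAm).aestronglyMeasurable) with hp
  have hpcoe : (p : Ω → ℝ) =ᵐ[P] A.indicator fun _ => (1:ℝ) := AEEqFun.coeFn_mk _ _
  have hpE : p ∈ Espace P M := by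
    intro Q hQ
    haveI : IsProbabilityMeasure Q := (hM hQ).1
    refine ((integrable_const (1:ℝ)).indicator hAm).congr ?_
    exact (hpcoe.filter_mono (hM hQ).2.1.ae_le).symm
  have hp0 : 0 ≤ᵐ[P] (p : Ω → ℝ) := by
    filter_upwards [hpcoe] with ω hω
    rw [hω]
    exact Set.indicator_nonneg (fun _ _ => zero_le_one) ω
  have hint0 : 0 ≤ ∫ ω, (p : Ω → ℝ) ω * (w : Ω → ℝ) ω ∂P := H p hpE hp0
  have hcongr : (fun ω => (p : Ω → ℝ) ω * (w : Ω → ℝ) ω) =ᵐ[P] A.indicator w' := by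
    filter_upwards [hpcoe, hww'] with ω h1 h2
    rw [h1, h2]
    by_cases hω : ω ∈ A
    · simp [Set.indicator_of_mem hω]
    · simp [Set.indicator_of_notMem hω]
  rw [integral_congr_ae hcongr] at hint0
  have hile : ∀ ω, A.indicator w' ω ≤ 0 := by
    intro ω
    by_cases hω : ω ∈ A
    · rw [Set.indicator_of_mem hω]; exact le_of_lt hω
    · rw [Set.indicator_of_notMem hω]
  have hieq : ∫ ω, A.indicator w' ω ∂P = 0 :=
    le_antisymm (integral_nonpos hile) hint0
  have hnegint : Integrable (A.indicator w') P := (hwint.congr hww').indicator hAm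
  have hzero : -A.indicator w' =ᵐ[P] 0 := by
    rw [← integral_eq_zero_iff_of_nonneg_ae
      (Filter.Eventually.of_forall fun ω => by
        simpa using neg_nonneg.mpr (hile ω)) hnegint.neg]
    simp only [Pi.neg_apply]
    rw [integral_neg, hieq, neg_zero]
  have : ∀ᵐ ω ∂P, 0 ≤ w' ω := by
    filter_upwards [hzero] with ω hω
    by_contra hlt
    push_neg at hlt
    have hωA : ω ∈ A := hlt
    rw [Pi.neg_apply, Pi.zero_apply, neg_eq_zero, Set.indicator_of_mem hωA] at hω
    exact absurd hω (ne_of_lt hlt)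
  filter_upwards [this, hww'] with ω h1 h2
  rw [h2]; exact h1

end Key


section Main

variable {Ω : Type*} [MeasurableSpace Ω] {P : Measure Ω} {K : Set (Ω →ₘ[P] ℝ)}
  {M : Set (Measure Ω)}

lemma zero_mem_Espace (hM : M ⊆ Msep P K) : (0 : Ω →ₘ[P] ℝ) ∈ Espace P M := by
  intro Q hQ
  exact (integrable_zero _ _ _).congr
    ((AEEqFun.coeFn_zero (β := ℝ) (μ := P)).filter_mono (hM hQ).2.1.ae_le).symm

lemma polar_eq_one [IsProbabilityMeasure P] (hK : IsWedgeF K) (hM : M ⊆ Msep P K) :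
    polarIn P (Fspace P M) (umbrella P K (Espace P M))
      = {w ∈ Fspace P M | (0 ≤ᵐ[P] (w : Ω → ℝ)) ∧ ∀ X ∈ K, pairP P X w ≤ 0} := by
  ext w
  constructor
  · rintro ⟨hwF, hpol⟩
    refine ⟨hwF, ?_, ?_⟩
    · refine ae_nonneg_of_test hM (F_integrable hM hwF) fun p hp hp0 => ?_
      have hz : (0 : Ω →ₘ[P] ℝ) - p ∈ umbrella P K (Espace P M) :=
        ⟨0, zero_mem_K hK, p, hp, hp0, rfl⟩
      have hle := hpol _ hz
      rw [pairP] at hle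
      have hcongr : (fun ω => ((0 - p : Ω →ₘ[P] ℝ) : Ω → ℝ) ω * (w : Ω → ℝ) ω) =ᵐ[P]
          (fun ω => -((p : Ω → ℝ) ω * (w : Ω → ℝ) ω)) := by
        filter_upwards [AEEqFun.coeFn_neg p] with ω h1
        rw [zero_sub, h1, Pi.neg_apply, neg_mul]
      rw [integral_congr_ae hcongr, integral_neg] at hle
      linarith
    · intro X hX
      refine hpol X ⟨X, hX, 0, ?_, ?_, (sub_zero X).symm⟩
      · exact zero_mem_Espace hM
      · filter_upwards [AEEqFun.coeFn_zero (β := ℝ) (μ := P)] with ω hω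
        simp [hω]
  · rintro ⟨hwF, hw0, hXle⟩
    refine ⟨hwF, ?_⟩
    rintro z ⟨g, hg, p, hp, hp0, rfl⟩
    have hgw := EF_integrable hM (K_sub_E hM hg) hwF
    have hpw := EF_integrable hM hp hwF
    have hcongr : (fun ω => ((g - p : Ω →ₘ[P] ℝ) : Ω → ℝ) ω * (w : Ω → ℝ) ω) =ᵐ[P]
        (fun ω => (g : Ω → ℝ) ω * (w : Ω → ℝ) ω - (p : Ω → ℝ) ω * (w : Ω → ℝ) ω) := by
      filter_upwards [AEEqFun.coeFn_sub g p] with ω hω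
      simp [hω, sub_mul]
    rw [pairP, integral_congr_ae hcongr, integral_sub hgw hpw]
    have h1 := hXle g hg
    rw [pairP] at h1
    have h2 : 0 ≤ ∫ ω, (p : Ω → ℝ) ω * (w : Ω → ℝ) ω ∂P := by
      refine integral_nonneg_of_ae ?_
      filter_upwards [hp0, hw0] with ω ha hb
      exact mul_nonneg ha hb
    linarith

lemma wcl_sub [IsProbabilityMeasure P] (hM : M ⊆ Msep P K) (hMne : M.Nonempty)
    {S : Set (Ω →ₘ[P] ℝ)} (hS : S ⊆ Cset P K) :
    Fspace P M ∩ wcl P (Espace P M) S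
      ⊆ Fspace P M ∩ wedgeGenF (dens P '' Msep P K) := by
  rintro v ⟨hvF, hv⟩
  have hKne : (Msep P K).Nonempty := ⟨hMne.choose, hM hMne.choose_spec⟩
  refine ⟨hvF, mem_wedgeGen_of hKne (F_integrable hM hvF) ?_ fun X hX => ?_⟩
  · refine ae_nonneg_of_test hM (F_integrable hM hvF) fun p hp hp0 => ?_
    by_contra hlt
    push_neg at hlt
    obtain ⟨s, hs, hclose⟩ := hv 1 (fun _ => p) (fun _ => hp)
      (-(∫ ω, (p : Ω → ℝ) ω * (v : Ω → ℝ) ω ∂P)) (by linarith)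
    have hs' := hS hs
    have hsp : 0 ≤ pairP P s p := by
      rw [pairP]
      refine integral_nonneg_of_ae ?_
      filter_upwards [hs'.1, hp0] with ω h1 h2
      exact mul_nonneg h1 h2
    have h2 := hclose 0
    have hvp : pairP P v p = ∫ ω, (p : Ω → ℝ) ω * (v : Ω → ℝ) ω ∂P := by
      rw [pairP]
      exact integral_congr_ae (Filter.Eventually.of_forall fun ω => mul_comm _ _)
    rw [hvp] at h2
    rw [abs_lt] at h2
    linarith [h2.1]
  · refine ⟨EF_integrable hM (K_sub_E hM hX) hvF, ?_⟩
    by_contra hlt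
    push_neg at hlt
    obtain ⟨s, hs, hclose⟩ := hv 1 (fun _ => X) (fun _ => K_sub_E hM hX)
      (∫ ω, (X : Ω → ℝ) ω * (v : Ω → ℝ) ω ∂P) hlt
    have hs' := hS hs
    have hsX : pairP P s X ≤ 0 := by
      rw [pairP]
      have hcomm : ∫ ω, (s : Ω → ℝ) ω * (X : Ω → ℝ) ω ∂P
          = ∫ ω, (X : Ω → ℝ) ω * (s : Ω → ℝ) ω ∂P :=
        integral_congr_ae (Filter.Eventually.of_forall fun ω => mul_comm _ _)
      rw [hcomm]
      exact (hs'.2 X hX).2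
    have h2 := hclose 0
    have hvX : pairP P v X = ∫ ω, (X : Ω → ℝ) ω * (v : Ω → ℝ) ω ∂P := by
      rw [pairP]
      exact integral_congr_ae (Filter.Eventually.of_forall fun ω => mul_comm _ _)
    rw [hvX, abs_lt] at h2
    linarith [h2.1]

end Main


/-- Representation of the polar wedge of the umbrella hull `s_E(K) = K − E₊`:
`s_E(K)^◁ = L¹₊(P) ∩ K^◁ = F ∩ cone(R(M₁))`; in particular `F ∩ cone(R(M₁))`
is `σ(F,E)`-closed and contains the `σ(F,E)`-closure of `cone(R(M))`. -/
theorem polar_umbrella_rep (P : Measure Ω) [IsProbabilityMeasure P]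
    (K : Set (Ω →ₘ[P] ℝ)) (hK : IsWedgeF K)
    (M : Set (Measure Ω)) (hMne : M.Nonempty) (hM : M ⊆ Msep P K) :
    polarIn P (Fspace P M) (umbrella P K (Espace P M))
        = {w ∈ Fspace P M | (0 ≤ᵐ[P] (w : Ω → ℝ)) ∧ ∀ X ∈ K, pairP P X w ≤ 0}
      ∧ polarIn P (Fspace P M) (umbrella P K (Espace P M))
        = Fspace P M ∩ wedgeGenF (dens P '' Msep P K)
      ∧ (Fspace P M ∩ wcl P (Espace P M) (Fspace P M ∩ wedgeGenF (dens P '' Msep P K))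
          ⊆ Fspace P M ∩ wedgeGenF (dens P '' Msep P K))
      ∧ (Fspace P M ∩ wcl P (Espace P M) (wedgeGenF (dens P '' M))
          ⊆ Fspace P M ∩ wedgeGenF (dens P '' Msep P K)) := by
  have hKne : (Msep P K).Nonempty := ⟨hMne.choose, hM hMne.choose_spec⟩
  have eq1 := polar_eq_one (P := P) hK hM
  have eq2 : polarIn P (Fspace P M) (umbrella P K (Espace P M))
      = Fspace P M ∩ wedgeGenF (dens P '' Msep P K) := by
    rw [eq1]
    ext w
    constructor
    · rintro ⟨hwF, hw0, hXle⟩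
      refine ⟨hwF, mem_wedgeGen_of hKne (F_integrable hM hwF) hw0 fun X hX => ?_⟩
      refine ⟨EF_integrable hM (K_sub_E hM hX) hwF, ?_⟩
      have h := hXle X hX
      rw [pairP] at h
      exact h
    · rintro ⟨hwF, hwg⟩
      obtain ⟨h0, hX⟩ := wedgeGen_sub_Cset hwg
      exact ⟨hwF, h0, fun X hX' => by rw [pairP]; exact (hX X hX').2⟩
  refine ⟨eq1, eq2, ?_, ?_⟩
  · exact wcl_sub hM hMne (Set.inter_subset_right.trans wedgeGen_sub_Cset)
  · exact wcl_sub hM hMne ((wedgeGenF_mono (Set.image_mono (f := dens P) hM)).trans wedgeGen_sub_Cset)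

end
end

section
/- Let E and F be Banach lattices and A : E → F a continuous linear operator. Then the following are equivalent: (i) A(E₊) is weakly (σ(F,F')) closed; (ii) for every b ∈ F, exactly one of the following holds: (1) there exists x ∈ E₊ with Ax = b, or (2) there exists y' ∈ F' with ⟨b, y'⟩ > 0 and A'y' ≤ 0 (i.e., an infinite-dimensional Farkas alternative holds). -/
open Set

section Aux

instance {F : Type*} [AddCommGroup F] [Module ℝ F] [TopologicalSpace F] :
    ContinuousSMul ℝ (WeakSpace ℝ F) :=
  WeakBilin.instContinuousSMul (topDualPairing ℝ F).flip

instance {F : Type*} [AddCommGroup F] [Module ℝ F] [TopologicalSpace F] :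
    IsTopologicalAddGroup (WeakSpace ℝ F) :=
  WeakBilin.instIsTopologicalAddGroup (topDualPairing ℝ F).flip

instance {F : Type*} [AddCommGroup F] [Module ℝ F] [TopologicalSpace F] :
    LocallyConvexSpace ℝ (WeakSpace ℝ F) :=
  WeakBilin.locallyConvexSpace

private lemma pow2_semiclosed {α : Type*} [Lattice α] [AddCommGroup α]
    [CovariantClass α α (· + ·) (· ≤ ·)] (k : ℕ) {a : α}
    (h : 0 ≤ (2 ^ k : ℕ) • a) : 0 ≤ a := by
  induction k generalizing a with
  | zero => simpa using h
  | succ n ih =>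
    refine nsmul_two_semiclosed (ih ?_)
    rwa [pow_succ, mul_smul] at h

private lemma real_smul_nonneg' {E : Type*} [NormedAddCommGroup E] [Lattice E] [IsOrderedAddMonoid E] [HasSolidNorm E] [NormedSpace ℝ E]
    {c : ℝ} {x : E} (hc : 0 ≤ c) (hx : 0 ≤ x) : 0 ≤ c • x := by
  set C : Set ℝ := {t : ℝ | 0 ≤ t • x} with hC
  have hCc : IsClosed C := isClosed_nonneg.preimage (continuous_id.smul continuous_const)
  have hdy : ∀ m k : ℕ, ((m : ℝ) / 2 ^ k) ∈ C := by
    intro m k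
    have key : (2 ^ k : ℕ) • (((m : ℝ) / 2 ^ k) • x) = m • x := by
      rw [← Nat.cast_smul_eq_nsmul ℝ (2 ^ k), ← Nat.cast_smul_eq_nsmul ℝ m, smul_smul]
      congr 1
      push_cast
      field_simp
    refine pow2_semiclosed k ?_
    rw [key]
    exact nsmul_nonneg hx m
  have h2 : ∀ n : ℕ, (0 : ℝ) < 2 ^ n := fun n => by positivity
  have hub : ∀ n : ℕ, ((⌊c * 2 ^ n⌋₊ : ℝ) / 2 ^ n) ≤ c := by
    intro n
    rw [div_le_iff₀ (h2 n)]
    exact Nat.floor_le (by positivity)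
  have hlb : ∀ n : ℕ, c - ((1 : ℝ) / 2) ^ n ≤ ((⌊c * 2 ^ n⌋₊ : ℝ) / 2 ^ n) := by
    intro n
    have hfl : c * 2 ^ n - 1 ≤ (⌊c * 2 ^ n⌋₊ : ℝ) := by
      have := Nat.lt_floor_add_one (c * 2 ^ n); linarith
    have hone : 1 / (2:ℝ) ^ n * 2 ^ n = 1 := one_div_mul_cancel (h2 n).ne'
    rw [div_pow, one_pow, le_div_iff₀ (h2 n)]
    nlinarith [hone]
  have htend : Filter.Tendsto (fun n : ℕ => ((⌊c * 2 ^ n⌋₊ : ℝ) / 2 ^ n))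
      Filter.atTop (nhds c) := by
    have hzero : Filter.Tendsto (fun n : ℕ => c - ((1 : ℝ) / 2) ^ n) Filter.atTop (nhds c) := by
      have := tendsto_pow_atTop_nhds_zero_of_lt_one (by norm_num : (0:ℝ) ≤ 1/2)
        (by norm_num : (1:ℝ)/2 < 1)
      simpa using (tendsto_const_nhds (x := c)).sub this
    exact tendsto_of_tendsto_of_tendsto_of_le_of_le hzero tendsto_const_nhds hlb hub
  exact hCc.mem_of_tendsto htend (Filter.Eventually.of_forall fun n => hdy _ n)

end Aux

/-- Infinite-dimensional Farkas lemma: for Banach lattices `E`, `F` and a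
continuous linear operator `A : E → F`, the image `A(E₊)` of the positive cone
is weakly closed if and only if for every `b ∈ F` exactly one of the following
holds: (1) `b = A x` for some `x ≥ 0`, or (2) there is a continuous functional
`y'` with `y'(b) > 0` and `A' y' ≤ 0` (i.e. `y'(A x) ≤ 0` for all `x ≥ 0`). -/
theorem farkas_infinite_dimensional
    {E F : Type*}
    [NormedAddCommGroup E] [Lattice E] [IsOrderedAddMonoid E] [HasSolidNorm E] [NormedSpace ℝ E] [CompleteSpace E]
    [NormedAddCommGroup F] [Lattice F] [IsOrderedAddMonoid F] [HasSolidNorm F] [NormedSpace ℝ F] [CompleteSpace F]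
    (A : E →L[ℝ] F) :
    IsClosed (X := WeakSpace ℝ F) (A '' {x : E | 0 ≤ x})
      ↔ ∀ b : F,
          Xor' (∃ x : E, 0 ≤ x ∧ A x = b)
            (∃ y' : F →L[ℝ] ℝ, 0 < y' b ∧ ∀ x : E, 0 ≤ x → y' (A x) ≤ 0) := by
  set S : Set F := A '' {x : E | 0 ≤ x} with hS
  -- the two alternatives are mutually exclusive
  have hexcl : ∀ b : F, (∃ x : E, 0 ≤ x ∧ A x = b) →
      ¬ (∃ y' : F →L[ℝ] ℝ, 0 < y' b ∧ ∀ x : E, 0 ≤ x → y' (A x) ≤ 0) := by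
    rintro b ⟨x, hx, rfl⟩ ⟨y', hy', hle⟩
    exact absurd (hle x hx) (not_le.mpr hy')
  constructor
  · intro hclosed b
    by_cases h1 : ∃ x : E, 0 ≤ x ∧ A x = b
    · exact Or.inl ⟨h1, hexcl b h1⟩
    · refine Or.inr ⟨?_, h1⟩
      have hbS : (b : WeakSpace ℝ F) ∉ S := by
        rintro ⟨x, hx, hxb⟩
        exact h1 ⟨x, hx, hxb⟩
      have hconvE : Convex ℝ ({x : E | 0 ≤ x}) := fun x hx y hy a c ha hc _ =>
        add_nonneg (real_smul_nonneg' ha hx) (real_smul_nonneg' hc hy)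
      have hconv : Convex ℝ (S : Set (WeakSpace ℝ F)) :=
        hconvE.is_linear_image ⟨A.map_add, fun c x => A.map_smul c x⟩
      obtain ⟨f, u, hfS, hfb⟩ :=
        geometric_hahn_banach_closed_point (E := WeakSpace ℝ F) hconv hclosed hbS
      -- 0 ∈ S hence u > 0
      have h0S : (0 : WeakSpace ℝ F) ∈ S := ⟨0, le_refl 0, by simp; rfl⟩
      have hu : 0 < u := by simpa using hfS 0 h0S
      -- f ≤ 0 on S since S is a cone
      have hfle : ∀ z ∈ S, f z ≤ 0 := by
        intro z hz
        by_contra hpos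
        push_neg at hpos
        obtain ⟨x, hx, rfl⟩ := hz
        obtain ⟨t, ht⟩ := exists_nat_gt (u / f (A x))
        have ht0 : (0:ℝ) ≤ (t : ℝ) := by positivity
        have hmem : ((t : ℝ) • A x : WeakSpace ℝ F) ∈ S :=
          ⟨(t : ℝ) • x, real_smul_nonneg' ht0 hx, by simp⟩
        have h2 := hfS _ hmem
        rw [show f ((t:ℝ) • A x) = (t:ℝ) * f (A x) from f.map_smul (t:ℝ) (A x)] at h2
        have : (t : ℝ) < u / f (A x) := by
          rw [lt_div_iff₀ hpos]; linarith
        linarith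
      -- build the functional on F
      refine ⟨f.comp (toWeakSpaceCLM ℝ F), ?_, ?_⟩
      · exact lt_trans hu hfb
      · intro x hx
        exact hfle (A x) ⟨x, hx, rfl⟩
  · intro halt
    rw [← isOpen_compl_iff, isOpen_iff_mem_nhds]
    intro b hb
    have h1 : ¬ ∃ x : E, 0 ≤ x ∧ A x = b := by
      rintro ⟨x, hx, hxb⟩
      exact hb ⟨x, hx, hxb⟩
    obtain ⟨y', hy'b, hy'S⟩ := ((halt b).resolve_left (fun h => h1 h.1)).1
    have hcont : Continuous fun z : WeakSpace ℝ F => y' z :=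
      WeakBilin.eval_continuous ((topDualPairing ℝ F).flip) y'
    have hopen : IsOpen {z : WeakSpace ℝ F | 0 < y' z} :=
      isOpen_lt continuous_const hcont
    refine Filter.mem_of_superset (hopen.mem_nhds hy'b) ?_
    rintro z hz ⟨x, hx, rfl⟩
    exact absurd (hy'S x hx) (not_le.mpr hz)
end
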